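/- For the round sphere 𝕊²_s(0) ⊂ ℝ³ of radius s and the function T(x) = sin(ln r) + (u·x)/r on ℝ³ \ B (with r = |x| and u ∈ ℝ³ fixed), the integral (1/(32π m)) ∫_{𝕊²_s} s² η^i (Δ_δ T − Hess_δ T(η,η))² dμ^δ, with η = x/s the unit normal, equals −cos(ln s)/(3m) u^i + O(s^{−1}) as s → ∞. -/

import Mathlib

/-!
On the sphere `‖x‖ = s` the integrand is explicit: with `η = x / s`,
`Δ_δ T - Hess_δ T(η, η) = 2 (cos (log s) - ⟪u, η⟫) / s²`, so the integral is
`4 ∫ ηⁱ (cos (log s) - ⟪u, η⟫)² dμ₁`. Rotation invariance of `μ₁` kills the odd moments and gives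
`∫ ηⁱ ηʲ dμ₁ = (4π / 3) δⁱʲ`, which evaluates this to `-(32π / 3) cos (log s) uⁱ`. The error term
is therefore identically zero.
-/

open MeasureTheory

/-- Second (flat) derivative `Hess_δ f (x)(v,w)` on `ℝ³`. -/
noncomputable def flatHess (f : EuclideanSpace ℝ (Fin 3) → ℝ)
    (x v w : EuclideanSpace ℝ (Fin 3)) : ℝ :=
  fderiv ℝ (fun y => fderiv ℝ f y v) x w

/-- Flat Laplacian `Δ_δ f (x)` on `ℝ³`. -/
noncomputable def flatLap (f : EuclideanSpace ℝ (Fin 3) → ℝ)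
    (x : EuclideanSpace ℝ (Fin 3)) : ℝ :=
  ∑ i : Fin 3, flatHess f x (EuclideanSpace.single i 1) (EuclideanSpace.single i 1)

open RealInnerProductSpace

section Calculus

variable {F : Type*} [NormedAddCommGroup F] [InnerProductSpace ℝ F]

theorem hasFDerivAt_norm_of_ne_zero {x : F} (hx : x ≠ 0) :
    HasFDerivAt (fun y : F => ‖y‖) (‖x‖⁻¹ • innerSL ℝ x) x := by
  have h := ((hasStrictFDerivAt_norm_sq x).hasFDerivAt).sqrt
    (by simpa using norm_ne_zero_iff.2 hx)
  simp only [Real.sqrt_sq (norm_nonneg _)] at h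
  refine h.congr_fderiv ?_
  ext v
  simp only [one_div, mul_inv_rev, smul_apply, coe_innerSL_apply, nsmul_eq_mul, Nat.cast_ofNat,
    smul_eq_mul]
  field_simp

theorem HasDerivAt.hasFDerivAt_comp_norm {g : ℝ → ℝ} {g' : ℝ} {x : F} (hx : x ≠ 0)
    (hg : HasDerivAt g g' ‖x‖) :
    HasFDerivAt (fun y : F => g ‖y‖) ((g' / ‖x‖) • innerSL ℝ x) x :=
  (hg.comp_hasFDerivAt x (hasFDerivAt_norm_of_ne_zero hx)).congr_fderiv
    (by rw [smul_smul, div_eq_mul_inv])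

/-- The function `T` of the paper. -/
noncomputable def sinLogAddDipole (u x : F) : ℝ := Real.sin (Real.log ‖x‖) + ⟪u, x⟫ / ‖x‖

theorem fderiv_sinLogAddDipole_apply (u : F) {x : F} (hx : x ≠ 0) (v : F) :
    fderiv ℝ (sinLogAddDipole u) x v =
      Real.cos (Real.log ‖x‖) / ‖x‖ ^ 2 * ⟪x, v⟫ + ⟪u, v⟫ / ‖x‖
        - ⟪u, x⟫ / ‖x‖ ^ 3 * ⟪x, v⟫ := by
  have hr : ‖x‖ ≠ 0 := norm_ne_zero_iff.2 hx
  have hsinLog := ((Real.hasDerivAt_log hr).sin).hasFDerivAt_comp_norm hx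
  have hdipole := (innerSL ℝ u).hasFDerivAt.mul ((hasDerivAt_inv hr).hasFDerivAt_comp_norm hx)
  have h : HasFDerivAt (sinLogAddDipole u) _ x := hsinLog.add hdipole
  rw [h.fderiv]
  simp only [coe_innerSL_apply, add_apply, smul_apply, smul_eq_mul]
  field_simp
  ring

theorem fderiv_fderiv_sinLogAddDipole_apply (u : F) {x : F} (hx : x ≠ 0) (v w : F) :
    fderiv ℝ (fun y => fderiv ℝ (sinLogAddDipole u) y v) x w =
      ((-Real.sin (Real.log ‖x‖) - 2 * Real.cos (Real.log ‖x‖)) / ‖x‖ ^ 4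
          + 3 * ⟪u, x⟫ / ‖x‖ ^ 5) * ⟪x, v⟫ * ⟪x, w⟫
        + (Real.cos (Real.log ‖x‖) / ‖x‖ ^ 2 - ⟪u, x⟫ / ‖x‖ ^ 3) * ⟪v, w⟫
        - (⟪u, v⟫ * ⟪x, w⟫ + ⟪x, v⟫ * ⟪u, w⟫) / ‖x‖ ^ 3 := by
  have hr : ‖x‖ ≠ 0 := norm_ne_zero_iff.2 hx
  have hfirst : (fun y => fderiv ℝ (sinLogAddDipole u) y v) =ᶠ[nhds x] fun y =>
      Real.cos (Real.log ‖y‖) / ‖y‖ ^ 2 * ⟪v, y⟫ + ⟪u, v⟫ / ‖y‖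
        - ⟪u, y⟫ / ‖y‖ ^ 3 * ⟪v, y⟫ := by
    filter_upwards [isOpen_ne.mem_nhds hx] with y hy
    rw [fderiv_sinLogAddDipole_apply u hy v, real_inner_comm v]
  have hcosLog := (((Real.hasDerivAt_log hr).cos).div (hasDerivAt_pow 2 ‖x‖)
    (pow_ne_zero 2 hr)).hasFDerivAt_comp_norm hx
  have hinv := ((hasDerivAt_inv hr).hasFDerivAt_comp_norm hx).const_mul ⟪u, v⟫
  have hcube := ((hasDerivAt_pow 3 ‖x‖).inv (pow_ne_zero 3 hr)).hasFDerivAt_comp_norm hx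
  have h : HasFDerivAt (fun y => Real.cos (Real.log ‖y‖) / ‖y‖ ^ 2 * ⟪v, y⟫ + ⟪u, v⟫ / ‖y‖
      - ⟪u, y⟫ / ‖y‖ ^ 3 * ⟪v, y⟫) _ x := ((hcosLog.mul (innerSL ℝ v).hasFDerivAt).add hinv).sub
    (((innerSL ℝ u).hasFDerivAt.mul hcube).mul (innerSL ℝ v).hasFDerivAt)
  rw [hfirst.fderiv_eq, h.fderiv]
  simp only [Pi.div_apply, coe_innerSL_apply, neg_mul, Nat.cast_ofNat, Nat.add_one_sub_one,
    pow_one, Pi.inv_apply, Pi.mul_apply, smul_add, sub_apply, add_apply, smul_apply, smul_eq_mul]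
  field_simp
  rw [real_inner_comm v x]
  ring

end Calculus

theorem flatLap_sub_flatHess_sinLogAddDipole (u : EuclideanSpace ℝ (Fin 3)) {s : ℝ}
    (hs : 0 < s) {η : EuclideanSpace ℝ (Fin 3)} (hη : ‖η‖ = 1) :
    flatLap (sinLogAddDipole u) (s • η) - flatHess (sinLogAddDipole u) (s • η) η η =
      2 * (Real.cos (Real.log s) - ⟪u, η⟫) / s ^ 2 := by
  have hx : s • η ≠ 0 := smul_ne_zero hs.ne' (norm_ne_zero_iff.1 (by simp [hη]))
  have hsq : η 0 ^ 2 + η 1 ^ 2 + η 2 ^ 2 = 1 := by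
    have h := EuclideanSpace.real_norm_sq_eq η
    rw [hη, one_pow, Fin.sum_univ_three] at h
    exact h.symm
  have hu : ⟪u, η⟫ = u 0 * η 0 + u 1 * η 1 + u 2 * η 2 := by
    simp [PiLp.inner_apply, Fin.sum_univ_three, mul_comm]
  simp only [flatLap, flatHess, Fin.sum_univ_three, fderiv_fderiv_sinLogAddDipole_apply u hx,
    inner_smul_left, inner_smul_right, EuclideanSpace.inner_single_right,
    real_inner_self_eq_norm_sq, norm_smul, hη, Real.norm_eq_abs, abs_of_pos hs, mul_one, one_mul,
    Real.ringHom_apply, PiLp.single_eq_same, one_pow]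
  field_simp
  linear_combination (-Real.sin (Real.log s) - 2 * Real.cos (Real.log s) + 3 * ⟪u, η⟫) * hsq
    + 2 * hu

theorem Continuous.integrable_of_measure_compl_eq_zero {X : Type*} [TopologicalSpace X]
    [T2Space X] [MeasurableSpace X] [OpensMeasurableSpace X] {μ : Measure X}
    [IsFiniteMeasureOnCompacts μ] {f : X → ℝ} {K : Set X} (hf : Continuous f)
    (hK : IsCompact K) (hμK : μ Kᶜ = 0) : Integrable f μ := by
  rw [← Measure.restrict_eq_self_of_ae_mem (mem_ae_iff.2 hμK)]
  exact hf.continuousOn.integrableOn_compact hK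

section Invariance

variable {E : Type*} [NormedAddCommGroup E] [InnerProductSpace ℝ E] [MeasurableSpace E]
  [BorelSpace E] {μ : Measure E}

theorem LinearIsometryEquiv.integral_comp_of_map_eq (A : E ≃ₗᵢ[ℝ] E) (hA : μ.map A = μ)
    (f : E → ℝ) : ∫ x, f (A x) ∂μ = ∫ x, f x ∂μ :=
  MeasurePreserving.integral_comp' (f := A.toHomeomorph.toMeasurableEquiv)
    ⟨A.continuous.measurable, hA⟩ f

theorem integral_eq_zero_of_odd (hneg : μ.map (LinearIsometryEquiv.neg ℝ) = μ) {f : E → ℝ}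
    (hf : ∀ x, f (-x) = -f x) : ∫ x, f x ∂μ = 0 := by
  have h := (LinearIsometryEquiv.neg ℝ).integral_comp_of_map_eq hneg f
  simp only [LinearIsometryEquiv.coe_neg, hf, integral_neg] at h
  linarith

end Invariance

section Moments

variable {ι : Type*} [Fintype ι] {μ : Measure (EuclideanSpace ℝ ι)}

theorem integral_coord_mul_coord_of_ne
    (hinv : ∀ A : EuclideanSpace ℝ ι ≃ₗᵢ[ℝ] EuclideanSpace ℝ ι, μ.map A = μ)
    {i j : ι} (hij : i ≠ j) : ∫ η, η i * η j ∂μ = 0 := by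
  classical
  let flip : EuclideanSpace ℝ ι ≃ₗᵢ[ℝ] EuclideanSpace ℝ ι := LinearIsometryEquiv.piLpCongrRight 2
    fun k => if k = j then LinearIsometryEquiv.neg ℝ else LinearIsometryEquiv.refl ℝ ℝ
  have h := flip.integral_comp_of_map_eq (hinv flip) fun η => η i * η j
  have hflip : ∀ η : EuclideanSpace ℝ ι, flip η i * flip η j = -(η i * η j) := fun η => by
    simp [flip, hij]
  simp only [hflip, integral_neg] at h
  linarith

theorem integral_coord_sq_eq
    (hinv : ∀ A : EuclideanSpace ℝ ι ≃ₗᵢ[ℝ] EuclideanSpace ℝ ι, μ.map A = μ) (i j : ι) :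
    ∫ η, η i ^ 2 ∂μ = ∫ η, η j ^ 2 ∂μ := by
  classical
  let swap := LinearIsometryEquiv.piLpCongrLeft 2 ℝ ℝ (Equiv.swap i j)
  have h := swap.integral_comp_of_map_eq (hinv swap) fun η => η i ^ 2
  simpa [swap] using h.symm

variable [IsFiniteMeasure μ]

theorem integral_coord_sq
    (hinv : ∀ A : EuclideanSpace ℝ ι ≃ₗᵢ[ℝ] EuclideanSpace ℝ ι, μ.map A = μ)
    (hsupp : μ (Metric.sphere 0 1)ᶜ = 0) (i : ι) :
    ∫ η, η i ^ 2 ∂μ = μ.real Set.univ / Fintype.card ι := by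
  have hsum : ∑ j, ∫ η, η j ^ 2 ∂μ = μ.real Set.univ := by
    rw [← integral_finsetSum _ fun j _ =>
      (show Continuous fun η : EuclideanSpace ℝ ι => η j ^ 2 by fun_prop
        ).integrable_of_measure_compl_eq_zero (isCompact_sphere 0 1) hsupp]
    have hone : (fun η : EuclideanSpace ℝ ι => ∑ j, η j ^ 2) =ᵐ[μ] fun _ => 1 := by
      filter_upwards [mem_ae_iff.2 hsupp] with η hη
      rw [← EuclideanSpace.real_norm_sq_eq, mem_sphere_zero_iff_norm.1 hη, one_pow]
    simp [integral_congr_ae hone]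
  have hcard : (Fintype.card ι : ℝ) ≠ 0 := by exact_mod_cast (Fintype.card_pos_iff.2 ⟨i⟩).ne'
  simp only [integral_coord_sq_eq hinv _ i, Finset.sum_const, Finset.card_univ,
    nsmul_eq_mul] at hsum
  rw [← hsum]
  field_simp

theorem integral_coord_mul_inner
    (hinv : ∀ A : EuclideanSpace ℝ ι ≃ₗᵢ[ℝ] EuclideanSpace ℝ ι, μ.map A = μ)
    (hsupp : μ (Metric.sphere 0 1)ᶜ = 0) (u : EuclideanSpace ℝ ι) (i : ι) :
    ∫ η, η i * ⟪u, η⟫ ∂μ = μ.real Set.univ / Fintype.card ι * u i := by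
  have hexpand : (fun η : EuclideanSpace ℝ ι => η i * ⟪u, η⟫) =
      fun η => ∑ j, u j * (η i * η j) := by
    ext η
    simp only [PiLp.inner_apply, RCLike.inner_apply, conj_trivial, Finset.mul_sum]
    exact Finset.sum_congr rfl fun j _ => by ring
  rw [hexpand, integral_finsetSum _ fun j _ =>
    (show Continuous fun η : EuclideanSpace ℝ ι => u j * (η i * η j) by fun_prop
      ).integrable_of_measure_compl_eq_zero (isCompact_sphere 0 1) hsupp]
  simp only [integral_const_mul]
  rw [Finset.sum_eq_single i
    (fun j _ hji => by rw [integral_coord_mul_coord_of_ne hinv hji.symm, mul_zero])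
    (fun h => absurd (Finset.mem_univ i) h)]
  simp only [← sq, integral_coord_sq hinv hsupp, mul_comm]

theorem integral_coord_mul_sub_inner_sq
    (hinv : ∀ A : EuclideanSpace ℝ ι ≃ₗᵢ[ℝ] EuclideanSpace ℝ ι, μ.map A = μ)
    (hsupp : μ (Metric.sphere 0 1)ᶜ = 0) (c : ℝ) (u : EuclideanSpace ℝ ι) (i : ι) :
    ∫ η, η i * (c - ⟪u, η⟫) ^ 2 ∂μ = -2 * c * (μ.real Set.univ / Fintype.card ι * u i) := by
  have hsplit : (fun η : EuclideanSpace ℝ ι => η i * (c - ⟪u, η⟫) ^ 2) =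
      fun η => (c ^ 2 * η i + η i * ⟪u, η⟫ ^ 2) - 2 * c * (η i * ⟪u, η⟫) := by
    ext η
    ring
  have hodd : ∫ η, c ^ 2 * η i + η i * ⟪u, η⟫ ^ 2 ∂μ = 0 :=
    integral_eq_zero_of_odd (hinv _) fun η => by simp only [PiLp.neg_apply, inner_neg_right]; ring
  rw [hsplit, integral_sub, hodd, integral_const_mul, integral_coord_mul_inner hinv hsupp]
  · ring
  all_goals
    exact Continuous.integrable_of_measure_compl_eq_zero (by fun_prop) (isCompact_sphere 0 1) hsupp

end Moments

/-- The surface measure of `𝕊²_s(0)` is encoded, under `x = sη`, as `s² μ₁`, where `μ₁` is the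
rotation-invariant measure of total mass `4π` on the unit sphere. -/
theorem correction_term_asymptotics_general (m : ℝ)
    (u : EuclideanSpace ℝ (Fin 3))
    (μ₁ : Measure (EuclideanSpace ℝ (Fin 3)))
    (hsupp : μ₁ (Metric.sphere (0 : EuclideanSpace ℝ (Fin 3)) 1)ᶜ = 0)
    (hinv : ∀ A : EuclideanSpace ℝ (Fin 3) ≃ₗᵢ[ℝ] EuclideanSpace ℝ (Fin 3),
      μ₁.map A = μ₁)
    (htot : μ₁ Set.univ = ENNReal.ofReal (4 * Real.pi)) :
    ∃ C s₀ : ℝ, 0 < C ∧ 0 < s₀ ∧ ∀ s ≥ s₀, ∀ i : Fin 3,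
      |(1 / (32 * Real.pi * m)) *
          (∫ η, s ^ 4 * η i *
            (flatLap (fun x => Real.sin (Real.log ‖x‖) + (inner ℝ u x : ℝ) / ‖x‖)
                (s • η) -
              flatHess (fun x => Real.sin (Real.log ‖x‖) + (inner ℝ u x : ℝ) / ‖x‖)
                (s • η) η η) ^ 2 ∂μ₁) -
        (-(Real.cos (Real.log s) / (3 * m)) * u i)| ≤ C / s := by
  have : IsFiniteMeasure μ₁ := ⟨htot ▸ ENNReal.ofReal_lt_top⟩
  have hmass : μ₁.real Set.univ = 4 * Real.pi := by
    rw [measureReal_def, htot, ENNReal.toReal_ofReal (by positivity)]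
  refine ⟨1, 1, one_pos, one_pos, fun s hs i => ?_⟩
  have hs0 : 0 < s := one_pos.trans_le hs
  have hintegrand : ∫ η, s ^ 4 * η i * (flatLap (sinLogAddDipole u) (s • η) -
      flatHess (sinLogAddDipole u) (s • η) η η) ^ 2 ∂μ₁ =
      4 * ∫ η, η i * (Real.cos (Real.log s) - ⟪u, η⟫) ^ 2 ∂μ₁ := by
    rw [← integral_const_mul]
    refine integral_congr_ae ?_
    filter_upwards [mem_ae_iff.2 hsupp] with η hη
    rw [flatLap_sub_flatHess_sinLogAddDipole u hs0 (mem_sphere_zero_iff_norm.1 hη)]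
    field_simp
    ring
  have hexact : 1 / (32 * Real.pi * m) * (4 * (-2 * Real.cos (Real.log s) *
      (4 * Real.pi / 3 * u i))) = -(Real.cos (Real.log s) / (3 * m)) * u i := by
    have := Real.pi_ne_zero
    field_simp
    ring
  rw [show (fun x => Real.sin (Real.log ‖x‖) + (inner ℝ u x : ℝ) / ‖x‖) = sinLogAddDipole u
    from rfl, hintegrand, integral_coord_mul_sub_inner_sq hinv hsupp, hmass, Fintype.card_fin,
    Nat.cast_ofNat, hexact, sub_self, abs_zero]
  positivity

/-- For the round sphere `𝕊²_s(0) ⊂ ℝ³` of radius `s` (whose surface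
measure is, under `x = sη`, the measure `s² μ₁` with `μ₁` the rotation-invariant surface
measure of total mass `4π` on the unit sphere) and `T(x) = sin(ln r) + (u·x)/r`
(`r = |x|`), the integral
`(1/(32π m)) ∫_{𝕊²_s} s² ηⁱ (Δ_δT − Hess_δT(η,η))² dμ^δ
  = (1/(32π m)) ∫_{unit sphere} s⁴ ηⁱ (Δ_δT(sη) − Hess_δT(sη)(η,η))² dμ₁`
equals `−cos(ln s)/(3m) uⁱ + O(s^{−1})` as `s → ∞`. -/
theorem correction_term_asymptotics (m : ℝ) (hm : m ≠ 0)
    (u : EuclideanSpace ℝ (Fin 3))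
    (μ₁ : Measure (EuclideanSpace ℝ (Fin 3)))
    (hsupp : μ₁ (Metric.sphere (0 : EuclideanSpace ℝ (Fin 3)) 1)ᶜ = 0)
    (hinv : ∀ A : EuclideanSpace ℝ (Fin 3) ≃ₗᵢ[ℝ] EuclideanSpace ℝ (Fin 3),
      μ₁.map A = μ₁)
    (htot : μ₁ Set.univ = ENNReal.ofReal (4 * Real.pi)) :
    ∃ C s₀ : ℝ, 0 < C ∧ 0 < s₀ ∧ ∀ s ≥ s₀, ∀ i : Fin 3,
      |(1 / (32 * Real.pi * m)) *
          (∫ η, s ^ 4 * η i *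
            (flatLap (fun x => Real.sin (Real.log ‖x‖) + (inner ℝ u x : ℝ) / ‖x‖)
                (s • η) -
              flatHess (fun x => Real.sin (Real.log ‖x‖) + (inner ℝ u x : ℝ) / ‖x‖)
                (s • η) η η) ^ 2 ∂μ₁) -
        (-(Real.cos (Real.log s) / (3 * m)) * u i)| ≤ C / s :=
  correction_term_asymptotics_general m u μ₁ hsupp hinv htot
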